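/- arXiv:0805.3853 — 2 statements merged into one kernel-verified Lean document; each statement's English description precedes it below -/
import Mathlib

section
/- Let α < 1 be real, let V : ℕ × ℕ → ℝ be weights, let (n_1,…,n_k) be positive integers with sum n and V(n,k) ≠ 0, and let 0 ≤ s ≤ m. Then binom(m,s) · ∑_{partitions {B_1,…,B_{k*}} of {1,…,s}} ∑_{(m_1,…,m_k)} ((m−s)!/(m_1!⋯m_k!)) · (V(n+m, k+k*)/V(n,k)) · ∏_{j=1}^k (n_j − α)_{m_j↑} · ∏_{i=1}^{k*} (1−α)_{|B_i|−1↑} = (1/V(n,k)) · binom(m,s) · (n − kα)_{m−s↑} · ∑_{k*=0}^{s} V(n+m, k+k*) · S_{s,k*}^{-1,-α}, where the outer sum ranges over all partitions of {1,…,s} into nonempty blocks (k* the number of blocks, with the empty partition for s = 0) and the inner sum over all k-tuples (m_1,…,m_k) of nonnegative integers with m_1 + ⋯ + m_k = m − s. -/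
/-- Rising factorial `(x)_{n↑} = ∏_{i=0}^{n-1} (x + i)`. -/
noncomputable def risefac (x : ℝ) (n : ℕ) : ℝ := ∏ i ∈ Finset.range n, (x + i)

/-- Generalized Stirling number `S_{n,k}^{-1,-α} = (n!/k!) ∑ ∏_j (1-α)_{n_j-1↑}/n_j!`,
the sum over positive tuples `(n_1,…,n_k)` with sum `n`. -/
noncomputable def genStirling (α : ℝ) (n k : ℕ) : ℝ :=
  ((n.factorial : ℝ) / k.factorial) *
    ∑ f ∈ (Finset.Nat.antidiagonalTuple k n).filter (fun f => ∀ i, 0 < f i),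
      ∏ j, risefac (1 - α) (f j - 1) / (f j).factorial

/-- `P` is a partition of `{1,…,n}` (modeled as `Fin n`) into nonempty blocks. -/
def isSetPartition {n : ℕ} (P : Finset (Finset (Fin n))) : Prop :=
  ∅ ∉ P ∧ (∀ A ∈ P, ∀ B ∈ P, A ≠ B → Disjoint A B) ∧ P.sup id = Finset.univ

instance {n : ℕ} (P : Finset (Finset (Fin n))) : Decidable (isSetPartition P) := by
  unfold isSetPartition; infer_instance

/-- All partitions of `{1,…,n}` into nonempty blocks (for `n = 0` only the empty partition). -/
def allPartitions (n : ℕ) : Finset (Finset (Finset (Fin n))) :=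
  Finset.univ.filter (fun P => isSetPartition P)

/-!
The double sum factorises into a sum over the allocations `(m_1,…,m_k)` of `m - s` and a sum over
the partitions of `{1,…,s}`. The first collapses by the multinomial Chu–Vandermonde identity for
rising factorials, `(∑ x_j)_{M↑}/M! = ∑ ∏_j (x_j)_{m_j↑}/m_j!`. The second, grouped by the number
`k*` of blocks, is handled by labelling blocks: `k*!` times the sum over partitions with `k*`
blocks of `∏_B w(|B|)` is the sum over surjections `g : {1,…,s} → {1,…,k*}` of `∏_i w(|g⁻¹ i|)`,
and expanding `(X_1 + ⋯ + X_{k*})^s` shows this equals `s! ∑ ∏_i w(n_i)/n_i!` over positive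
compositions `(n_1,…,n_{k*})` of `s`, which for `w(t) = (1-α)_{t-1↑}` is `k*! S_{s,k*}^{-1,-α}`.
-/

open Finset
open scoped Nat

theorem risefac_succ (x : ℝ) (n : ℕ) : risefac x (n + 1) = risefac x n * (x + n) :=
  prod_range_succ _ n

theorem risefac_add (x y : ℝ) (n : ℕ) :
    risefac (x + y) n =
      ∑ ij ∈ antidiagonal n, (n.choose ij.1 : ℝ) * (risefac x ij.1 * risefac y ij.2) := by
  induction n with
  | zero => simp [risefac]
  | succ n ih =>
    rw [sum_antidiagonal_choose_succ_mul (fun i j => risefac x i * risefac y j), risefac_succ,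
      ih, sum_mul, ← sum_add_distrib]
    refine sum_congr rfl fun ij hij => ?_
    obtain rfl : ij.1 + ij.2 = n := mem_antidiagonal.1 hij
    rw [Nat.choose_symm_of_eq_add rfl, risefac_succ, risefac_succ]
    push_cast
    ring

theorem risefac_add_div_factorial (x y : ℝ) (n : ℕ) :
    risefac (x + y) n / n ! =
      ∑ ij ∈ antidiagonal n, risefac x ij.1 / ij.1 ! * (risefac y ij.2 / ij.2 !) := by
  rw [risefac_add, sum_div]
  refine sum_congr rfl fun ij hij => ?_
  obtain rfl : ij.1 + ij.2 = n := mem_antidiagonal.1 hij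
  rw [Nat.cast_add_choose]
  field_simp

theorem risefac_sum_div_factorial {ι : Type*} [DecidableEq ι] (t : Finset ι) (x : ι → ℝ)
    (n : ℕ) :
    risefac (∑ j ∈ t, x j) n / n ! =
      ∑ f ∈ t.piAntidiag n, ∏ j ∈ t, risefac (x j) (f j) / (f j)! := by
  induction t using cons_induction generalizing n with
  | empty =>
    cases n with
    | zero => simp [risefac]
    | succ n => simp [risefac, prod_range_succ']
  | cons i t hi ih =>
    rw [sum_cons, risefac_add_div_factorial, piAntidiag_cons, sum_disjiUnion]
    refine sum_congr rfl fun p _ => ?_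
    rw [ih, mul_sum, sum_map]
    refine sum_congr rfl fun g hg => ?_
    have hgi : g i = 0 := by
      by_contra h
      exact hi ((mem_piAntidiag.1 hg).2 i h)
    rw [prod_cons]
    simp only [addRightEmbedding_apply, Pi.add_apply, hgi, zero_add]
    congr 1
    refine prod_congr rfl fun j hj => ?_
    rw [if_neg (ne_of_mem_of_not_mem hj hi), add_zero]

theorem sum_antidiagonalTuple_prod_risefac (k M : ℕ) (x : Fin k → ℝ) :
    ∑ f ∈ Nat.antidiagonalTuple k M, ((M ! : ℝ) / ∏ j, ((f j)! : ℝ)) * ∏ j, risefac (x j) (f j)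
      = risefac (∑ j, x j) M := by
  have hM : (M ! : ℝ) ≠ 0 := by positivity
  rw [← mul_div_cancel_left₀ (risefac _ M) hM, mul_div_assoc, risefac_sum_div_factorial,
    piAntidiag_univ_fin_eq_antidiagonalTuple, mul_sum]
  refine sum_congr rfl fun f _ => ?_
  rw [prod_div_distrib]
  ring

section Fibers

variable {α ι : Type*} [Fintype α] [DecidableEq ι]

def fibers (g : α → ι) (i : ι) : Finset α := {x | g x = i}

@[simp]
theorem mem_fibers {g : α → ι} {i : ι} {x : α} : x ∈ fibers g i ↔ g x = i := by
  simp [fibers]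

theorem fibers_injective {g : α → ι} (hg : ∀ i, (fibers g i).Nonempty) :
    Function.Injective (fibers g) := by
  intro i i' h
  obtain ⟨x, hx⟩ := hg i
  have hx' : x ∈ fibers g i' := h ▸ hx
  exact (mem_fibers.1 hx).symm.trans (mem_fibers.1 hx')

theorem sum_card_fibers_eq_sum_multinomial_smul [DecidableEq α] [Fintype ι] {M : Type*}
    [AddCommMonoid M] (F : (ι → ℕ) → M) :
    ∑ g : α → ι, F (fun i => #(fibers g i))
      = ∑ f ∈ piAntidiag univ (Fintype.card α), Nat.multinomial univ f • F f := by
  -- In `ℕ[ι → ℕ]` the product `∏ₓ X_{g x}` is the monomial of exponent `(#(fibers g i))ᵢ`;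
  -- compare the two expansions of `(∑ᵢ Xᵢ) ^ card α` and pair coefficients with `F`.
  let X (i : ι) : AddMonoidAlgebra ℕ (ι → ℕ) := .single (Pi.single i 1) 1
  have monomial_eq (c : ι → ℕ) : ∏ i, X i ^ c i = .single c 1 := by
    simp only [X, AddMonoidAlgebra.single_pow, one_pow, AddMonoidAlgebra.prod_single,
      prod_const_one]
    congr
    ext j
    simp [Finset.sum_apply, Pi.single_apply]
  have expand : ∑ g : α → ι, AddMonoidAlgebra.single (fun i => #(fibers g i)) 1
      = ∑ f ∈ piAntidiag univ (Fintype.card α), Nat.multinomial univ f • .single f 1 := by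
    calc _ = ∑ g : α → ι, ∏ x, X (g x) := by
          refine sum_congr rfl fun g _ => ?_
          rw [← monomial_eq, ← prod_fiberwise univ g (fun x => X (g x))]
          refine prod_congr rfl fun i _ => ?_
          rw [prod_congr rfl fun x hx => by rw [(mem_filter.1 hx).2], prod_const]
          rfl
      _ = (∑ i, X i) ^ Fintype.card α := by
          rw [← Fintype.prod_sum, prod_const, card_univ]
      _ = _ := by
          rw [sum_pow_eq_sum_piAntidiag]
          simp only [monomial_eq, nsmul_eq_mul]
  simpa [AddMonoidAlgebra.coeff_sum, AddMonoidAlgebra.coeff_single] using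
    congrArg (fun p => Finsupp.linearCombination ℕ F p.coeff) expand

end Fibers

theorem sum_prod_card_fibers_eq_factorial_mul_sum (s k : ℕ) (W : ℕ → ℝ) :
    ∑ g : Fin s → Fin k, ∏ i, W #(fibers g i)
      = s ! * ∑ f ∈ Nat.antidiagonalTuple k s, ∏ i, W (f i) / (f i)! := by
  rw [sum_card_fibers_eq_sum_multinomial_smul (fun f => ∏ i, W (f i)), Fintype.card_fin,
    piAntidiag_univ_fin_eq_antidiagonalTuple, mul_sum]
  refine sum_congr rfl fun f hf => ?_
  have hspec := Nat.multinomial_spec univ f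
  rw [Nat.mem_antidiagonalTuple.1 hf] at hspec
  have hfact : (∏ i, ((f i)! : ℝ)) ≠ 0 := prod_ne_zero_iff.2 fun i _ => by positivity
  rw [nsmul_eq_mul, prod_div_distrib, ← hspec]
  push_cast
  field_simp

def isSetPartition.toFinpartition {n : ℕ} {P : Finset (Finset (Fin n))}
    (hP : isSetPartition P) : Finpartition (univ : Finset (Fin n)) where
  parts := P
  supIndep := supIndep_iff_pairwiseDisjoint.2 fun A hA B hB hAB => hP.2.1 A hA B hB hAB
  sup_parts := hP.2.2
  bot_notMem := hP.1

theorem card_le_of_mem_allPartitions {n : ℕ} {P : Finset (Finset (Fin n))}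
    (hP : P ∈ allPartitions n) : #P ≤ n :=
  (mem_filter.1 hP).2.toFinpartition.card_parts_le_card.trans_eq (card_fin n)

theorem isSetPartition_image_fibers {s k : ℕ} {g : Fin s → Fin k}
    (hg : ∀ i, (fibers g i).Nonempty) : isSetPartition (univ.image (fibers g)) := by
  refine ⟨fun h => ?_, ?_, ?_⟩
  · obtain ⟨i, -, hi⟩ := mem_image.1 h
    exact (hg i).ne_empty hi
  · simp only [mem_image, mem_univ, true_and]
    rintro _ ⟨i, rfl⟩ _ ⟨i', rfl⟩ hne
    exact disjoint_left.2 fun x hi hi' =>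
      hne (by rw [(mem_fibers.1 hi).symm.trans (mem_fibers.1 hi')])
  · refine eq_univ_of_forall fun x => mem_sup.2 ⟨_, mem_image_of_mem _ (mem_univ (g x)), ?_⟩
    simp

theorem card_labelings_eq_factorial {s k : ℕ} {P : Finset (Finset (Fin s))}
    (hP : isSetPartition P) (hk : #P = k) :
    #{g : Fin s → Fin k | (∀ i, (fibers g i).Nonempty) ∧ univ.image (fibers g) = P} = k ! := by
  set Q := hP.toFinpartition
  have part_mem (x : Fin s) : Q.part x ∈ P := Q.part_mem.2 (mem_univ x)
  let label (e : Fin k ≃ P) (x : Fin s) : Fin k := e.symm ⟨Q.part x, part_mem x⟩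
  have fibers_label (e : Fin k ≃ P) (i : Fin k) : fibers (label e) i = e i := by
    ext x
    simp [label, Equiv.symm_apply_eq, Subtype.ext_iff, Q.part_eq_iff_mem (e i).2]
  have fibers_mem {g : Fin s → Fin k} (hg : univ.image (fibers g) = P) (i : Fin k) :
      fibers g i ∈ P :=
    hg ▸ mem_image_of_mem _ (mem_univ i)
  have card_equivs : #(univ : Finset (Fin k ≃ P)) = k ! := by
    rw [card_univ, Fintype.card_equiv (Fintype.equivOfCardEq (by simp [hk])), Fintype.card_fin]
  rw [← card_equivs]
  refine (card_bij' (fun e _ => label e) (fun g hg => Equiv.ofBijective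
      (fun i => ⟨fibers g i, fibers_mem (mem_filter.1 hg).2.2 i⟩) ⟨?_, ?_⟩) ?_ ?_ ?_ ?_).symm
  · exact fun i i' h => fibers_injective (mem_filter.1 hg).2.1 (congrArg Subtype.val h)
  · rintro ⟨A, hA⟩
    rw [← (mem_filter.1 hg).2.2] at hA
    obtain ⟨i, -, rfl⟩ := mem_image.1 hA
    exact ⟨i, rfl⟩
  · intro e _
    refine mem_filter.2 ⟨mem_univ _, fun i => ?_, ?_⟩
    · rw [fibers_label]
      exact Q.nonempty_of_mem_parts (e i).2
    ext A
    simp only [mem_image, mem_univ, true_and, fibers_label]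
    exact ⟨fun ⟨i, hi⟩ => hi ▸ (e i).2, fun hA => ⟨e.symm ⟨A, hA⟩, by simp⟩⟩
  · exact fun _ _ => mem_univ _
  · exact fun e _ => Equiv.ext fun i => Subtype.ext (fibers_label e i)
  · intro g hg
    funext x
    rw [Equiv.symm_apply_eq]
    refine Subtype.ext ((Q.part_eq_iff_mem (fibers_mem (mem_filter.1 hg).2.2 (g x))).2 ?_)
    simp

theorem sum_prod_card_fibers_eq_factorial_mul_sum_partitions {s k : ℕ} (W : ℕ → ℝ)
    (hW : W 0 = 0) :
    ∑ g : Fin s → Fin k, ∏ i, W #(fibers g i)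
      = k ! * ∑ P ∈ allPartitions s with #P = k, ∏ A ∈ P, W #A := by
  calc _ = ∑ g with ∀ i, (fibers g i).Nonempty, ∏ i, W #(fibers g i) := by
        refine (sum_filter_of_ne fun g _ hne i => ?_).symm
        by_contra hempty
        rw [not_nonempty_iff_eq_empty] at hempty
        exact hne (prod_eq_zero (mem_univ i) (by rw [hempty, card_empty, hW]))
    _ = ∑ g with ∀ i, (fibers g i).Nonempty, ∏ A ∈ univ.image (fibers g), W #A := by
        refine sum_congr rfl fun g hg => (prod_image (f := fun A => W #A) ?_).symm
        exact fun i _ i' _ h => fibers_injective (mem_filter.1 hg).2 h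
    _ = ∑ P ∈ allPartitions s with #P = k,
          ∑ g with (∀ i, (fibers g i).Nonempty) ∧ univ.image (fibers g) = P, ∏ A ∈ P, W #A := by
        rw [← sum_fiberwise_of_maps_to (t := {P ∈ allPartitions s | #P = k})
          (g := fun g => univ.image (fibers g)) ?maps]
        · refine sum_congr rfl fun P _ => ?_
          rw [filter_filter]
          exact sum_congr rfl fun g hg => by rw [(mem_filter.1 hg).2.2]
        intro g hg
        have hg := (mem_filter.1 hg).2
        refine mem_filter.2 ⟨mem_filter.2 ⟨mem_univ _, isSetPartition_image_fibers hg⟩, ?_⟩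
        rw [card_image_of_injective _ (fibers_injective hg), card_univ, Fintype.card_fin]
    _ = _ := by
        rw [mul_sum]
        refine sum_congr rfl fun P hP => ?_
        obtain ⟨hP, hk⟩ := mem_filter.1 hP
        rw [sum_const, card_labelings_eq_factorial (mem_filter.1 hP).2 hk, nsmul_eq_mul]

theorem sum_partitions_card_eq_genStirling (α : ℝ) (s k : ℕ) :
    ∑ P ∈ allPartitions s with #P = k, ∏ A ∈ P, risefac (1 - α) (#A - 1)
      = genStirling α s k := by
  -- Setting the weight to `0` at `0` discards non-surjective labellings and compositions
  -- with an empty part.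
  let W (t : ℕ) : ℝ := if t = 0 then 0 else risefac (1 - α) (t - 1)
  have hcount := sum_prod_card_fibers_eq_factorial_mul_sum_partitions (s := s) (k := k) W rfl
  rw [sum_prod_card_fibers_eq_factorial_mul_sum] at hcount
  have hblocks : ∀ P ∈ {P ∈ allPartitions s | #P = k},
      ∏ A ∈ P, W #A = ∏ A ∈ P, risefac (1 - α) (#A - 1) := by
    intro P hP
    have hempty : ∅ ∉ P := (mem_filter.1 (mem_filter.1 hP).1).2.1
    exact prod_congr rfl fun A hA =>
      if_neg (card_ne_zero.2 (nonempty_iff_ne_empty.2 (ne_of_mem_of_not_mem hA hempty)))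
  have htuples : ∑ f ∈ Nat.antidiagonalTuple k s, ∏ i, W (f i) / (f i)!
      = ∑ f ∈ Nat.antidiagonalTuple k s with ∀ i, 0 < f i,
          ∏ i, risefac (1 - α) (f i - 1) / (f i)! := by
    rw [sum_filter]
    refine sum_congr rfl fun f _ => ?_
    split_ifs with hpos
    · exact prod_congr rfl fun i _ => by simp only [W, if_neg (hpos i).ne']
    · obtain ⟨i, hi⟩ := not_forall.1 hpos
      exact prod_eq_zero (mem_univ i) (by simp [W, Nat.eq_zero_of_not_pos hi])
  rw [sum_congr rfl hblocks, htuples] at hcount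
  rw [genStirling, div_mul_eq_mul_div, hcount]
  field_simp

theorem gibbs_joint_new_old_general (α : ℝ) (V : ℕ → ℕ → ℝ)
    (k : ℕ) (nvec : Fin k → ℕ)
    (n : ℕ) (hsum : ∑ j, nvec j = n)
    (s m : ℕ) :
    (m.choose s : ℝ) *
        ∑ P ∈ allPartitions s, ∑ f ∈ Finset.Nat.antidiagonalTuple k (m - s),
          (((m - s).factorial : ℝ) / ∏ j, ((f j).factorial : ℝ)) *
            (V (n + m) (k + P.card) / V n k) *
            (∏ j, risefac ((nvec j : ℝ) - α) (f j)) *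
            ∏ A ∈ P, risefac (1 - α) (A.card - 1)
      = (1 / V n k) * (m.choose s : ℝ) * risefac ((n : ℝ) - k * α) (m - s) *
          ∑ kstar ∈ Finset.range (s + 1), V (n + m) (k + kstar) * genStirling α s kstar := by
  have hold : ∑ f ∈ Nat.antidiagonalTuple k (m - s),
      ((m - s)! / ∏ j, ((f j)! : ℝ)) * ∏ j, risefac ((nvec j : ℝ) - α) (f j)
        = risefac (n - k * α) (m - s) := by
    rw [sum_antidiagonalTuple_prod_risefac, sum_sub_distrib, ← Nat.cast_sum, hsum, sum_const,
      card_univ, Fintype.card_fin, nsmul_eq_mul]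
  have hnew : ∑ P ∈ allPartitions s, V (n + m) (k + #P) * ∏ A ∈ P, risefac (1 - α) (#A - 1)
      = ∑ kstar ∈ range (s + 1), V (n + m) (k + kstar) * genStirling α s kstar := by
    rw [← sum_fiberwise_of_maps_to (g := card) (t := range (s + 1))
      fun P hP => mem_range.2 (Nat.lt_succ_of_le (card_le_of_mem_allPartitions hP))]
    refine sum_congr rfl fun j _ => ?_
    rw [← sum_partitions_card_eq_genStirling, mul_sum]
    exact sum_congr rfl fun P hP => by rw [(mem_filter.1 hP).2]
  calc _ = (m.choose s : ℝ) / V n k *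
        ((∑ P ∈ allPartitions s, V (n + m) (k + #P) * ∏ A ∈ P, risefac (1 - α) (#A - 1)) *
          ∑ f ∈ Nat.antidiagonalTuple k (m - s),
            ((m - s)! / ∏ j, ((f j)! : ℝ)) * ∏ j, risefac ((nvec j : ℝ) - α) (f j)) := by
        rw [sum_mul_sum, mul_sum, mul_sum]
        refine sum_congr rfl fun P _ => ?_
        rw [mul_sum, mul_sum]
        refine sum_congr rfl fun f _ => ?_
        ring
    _ = _ := by
        rw [hnew, hold]
        ring

/-- Joint distribution of the number of new tables and the allocation at old tables for a
Gibbs partition of type `α`: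
`binom(m,s) ∑_P ∑_{(m_1,…,m_k)} ((m−s)!/(m_1!⋯m_k!)) (V(n+m,k+k*)/V(n,k))
  ∏_j (n_j−α)_{m_j↑} ∏_i (1−α)_{|B_i|−1↑}
  = (1/V(n,k)) binom(m,s) (n−kα)_{m−s↑} ∑_{k*=0}^s V(n+m,k+k*) S_{s,k*}^{-1,-α}`,
where `P = {B_1,…,B_{k*}}` runs over partitions of `{1,…,s}` and `(m_1,…,m_k)` over
nonnegative tuples with sum `m−s`. -/
theorem gibbs_joint_new_old (α : ℝ) (hα : α < 1) (V : ℕ → ℕ → ℝ)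
    (k : ℕ) (nvec : Fin k → ℕ) (hpos : ∀ j, 0 < nvec j)
    (n : ℕ) (hsum : ∑ j, nvec j = n) (hVn : V n k ≠ 0)
    (s m : ℕ) (hsm : s ≤ m) :
    (m.choose s : ℝ) *
        ∑ P ∈ allPartitions s, ∑ f ∈ Finset.Nat.antidiagonalTuple k (m - s),
          (((m - s).factorial : ℝ) / ∏ j, ((f j).factorial : ℝ)) *
            (V (n + m) (k + P.card) / V n k) *
            (∏ j, risefac ((nvec j : ℝ) - α) (f j)) *
            ∏ A ∈ P, risefac (1 - α) (A.card - 1)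
      = (1 / V n k) * (m.choose s : ℝ) * risefac ((n : ℝ) - k * α) (m - s) *
          ∑ kstar ∈ Finset.range (s + 1), V (n + m) (k + kstar) * genStirling α s kstar :=
  gibbs_joint_new_old_general α V k nvec n hsum s m
end

section
/- Let α < 1 be real, let V : ℕ × ℕ → ℝ be weights, let (n_1,…,n_k) be positive integers with sum n and V(n,k) ≠ 0, let (m_1,…,m_k) be nonnegative integers with sum m − s where s ≥ 1, and suppose D := ∑_{k*'=1}^{s} V(n+m, k+k*') · S_{s,k*'}^{-1,-α} ≠ 0 and ∏_{j=1}^k (n_j − α)_{m_j↑} ≠ 0. Then for every k*-tuple (s_1,…,s_{k*}) of positive integers with s_1 + ⋯ + s_{k*} = s, the conditional EPPF of the partition obtained by deletion of the first k classes satisfies: [p(n_1+m_1,…,n_k+m_k, s_1,…,s_{k*})/p(n_1,…,n_k)] / [∑_{partitions {B_1,…,B_{k*'}} of {1,…,s}} p(n_1+m_1,…,n_k+m_k, |B_1|,…,|B_{k*'}|)/p(n_1,…,n_k)] = V(n+m, k+k*) · ∏_{i=1}^{k*} (1−α)_{s_i−1↑} / D, where p is the Gibbs EPPF of type α with weights V.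 -/
/-! The denominator groups the partitions `{B_1,…,B_{k*'}}` of `{1,…,s}` by their number
of blocks, and the common factor `∏_j (1-α)_{n_j+m_j-1↑} / p(n_1,…,n_k)` cancels, positive
because `1 - α > 0`. What remains is the combinatorial meaning of the generalized Stirling numbers:
`S_{s,k'}^{-1,-α} = ∑_{|P| = k'} ∏_{B ∈ P} (1-α)_{|B|-1↑}`. To see it, count the ordered
partitions `(B_1,…,B_{k'})` of `{1,…,s}` into nonempty blocks in two ways: each set partition
with `k'` blocks has `k'!` orderings, while the ordered partitions with block sizes
`(f_1,…,f_{k'})` are counted by the multinomial coefficient `s! / ∏_j f_j!`. -/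

open Finset Function
open scoped Nat

lemma risefac_pos {x : ℝ} (hx : 0 < x) (n : ℕ) : 0 < risefac x n :=
  prod_pos fun _ _ => by positivity

lemma Finset.sup_univ_fin_cons {β : Type*} [DecidableEq β] {k : ℕ} (A : Finset β)
    (u : Fin k → Finset β) :
    univ.sup (Fin.cons A u : Fin (k + 1) → Finset β) = A ∪ univ.sup u := by
  rw [Fin.univ_succ, sup_cons, sup_map]
  simp [comp_def]

lemma Finset.disjoint_and_union_eq_iff {β : Type*} [DecidableEq β] {A X S : Finset β} :
    Disjoint A X ∧ A ∪ X = S ↔ A ⊆ S ∧ X = S \ A := by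
  constructor
  · rintro ⟨hAX, rfl⟩
    exact ⟨subset_union_left, (union_sdiff_cancel_left hAX).symm⟩
  · rintro ⟨hAS, rfl⟩
    exact ⟨disjoint_sdiff, union_sdiff_of_subset hAS⟩

section OrderedPartitions

variable {β : Type*} [Fintype β] [DecidableEq β]

def orderedPartitions (S : Finset β) (k : ℕ) : Finset (Fin k → Finset β) :=
  {t | (∀ i j, i ≠ j → Disjoint (t i) (t j)) ∧ univ.sup t = S}

lemma mem_orderedPartitions {S : Finset β} {k : ℕ} {t : Fin k → Finset β} :
    t ∈ orderedPartitions S k ↔ Pairwise (Disjoint on t) ∧ univ.sup t = S := by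
  simp [orderedPartitions, Pairwise]

lemma cons_mem_orderedPartitions_succ {k : ℕ} {S A : Finset β} {u : Fin k → Finset β} :
    Fin.cons A u ∈ orderedPartitions S (k + 1) ↔
      A ⊆ S ∧ u ∈ orderedPartitions (S \ A) k := by
  have hdisj : (∀ j, Disjoint A (u j)) ↔ Disjoint A (univ.sup u) := by
    simp [Finset.disjoint_sup_right]
  have hcover := disjoint_and_union_eq_iff (A := A) (X := univ.sup u) (S := S)
  simp only [mem_orderedPartitions, sup_univ_fin_cons, pairwise_fin_succ_iff_of_isSymm, onFun,
    Fin.cons_zero, Fin.cons_succ, hdisj]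
  tauto

theorem card_orderedPartitions_filter_card_eq {k : ℕ} (S : Finset β) (n : Fin k → ℕ)
    (hn : ∑ j, n j = #S) :
    #{t ∈ orderedPartitions S k | ∀ j, #(t j) = n j} = Nat.multinomial univ n := by
  induction k generalizing S with
  | zero =>
    obtain rfl : S = ∅ := by simpa [eq_comm] using hn
    simp [orderedPartitions, Nat.multinomial, Subsingleton.elim _ (fun i : Fin 0 => i.elim0)]
  | succ k ih =>
    have hsplit : #{t ∈ orderedPartitions S (k + 1) | ∀ j, #(t j) = n j} =
        #((S.powersetCard (n 0)).sigma fun A =>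
          {u ∈ orderedPartitions (S \ A) k | ∀ j, #(u j) = n j.succ}) := by
      refine card_bij' (fun t _ => ⟨t 0, Fin.tail t⟩) (fun p _ => Fin.cons p.1 p.2) ?_ ?_ ?_ ?_
      · intro t ht
        rw [mem_filter, ← Fin.cons_self_tail t, cons_mem_orderedPartitions_succ,
          Fin.forall_fin_succ] at ht
        simp_all [Fin.tail]
      · rintro ⟨A, u⟩ hp
        simp only [mem_sigma, mem_powersetCard, mem_filter] at hp
        simp [cons_mem_orderedPartitions_succ, Fin.forall_fin_succ, hp]
      · intro t _
        exact Fin.cons_self_tail t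
      · intro p _
        simp
    rw [hsplit, card_sigma, sum_congr rfl fun A hA => ih (S \ A) (fun j => n j.succ) ?_]
    · rw [sum_const, card_powersetCard, smul_eq_mul, Fin.univ_succ, Nat.multinomial_cons]
      simp only [sum_map, Function.Embedding.coeFn_mk, ← Fin.sum_univ_succ, hn]
      simp [Nat.multinomial, prod_map]
    · rw [mem_powersetCard] at hA
      rw [card_sdiff_of_subset hA.1, hA.2, ← hn, Fin.sum_univ_succ, Nat.add_sub_cancel_left]

lemma sum_card_of_mem_orderedPartitions {S : Finset β} {k : ℕ} {t : Fin k → Finset β}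
    (ht : t ∈ orderedPartitions S k) : ∑ j, #(t j) = #S := by
  obtain ⟨hdisj, hsup⟩ := mem_orderedPartitions.1 ht
  rw [← hsup, sup_eq_biUnion, card_biUnion fun i _ j _ hij => hdisj hij]

theorem sum_orderedPartitions_prod_card_eq_sum_multinomial {R : Type*} [CommSemiring R]
    (S : Finset β) (k : ℕ) (F : ℕ → R) :
    ∑ t ∈ orderedPartitions S k with ∀ j, (t j).Nonempty, ∏ j, F #(t j) =
      ∑ f ∈ Nat.antidiagonalTuple k #S with ∀ j, 0 < f j,
        Nat.multinomial univ f * ∏ j, F (f j) := by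
  have hmaps : ∀ t ∈ {t ∈ orderedPartitions S k | ∀ j, (t j).Nonempty},
      (fun j => #(t j)) ∈ {f ∈ Nat.antidiagonalTuple k #S | ∀ j, 0 < f j} := by
    intro t ht
    rw [mem_filter] at ht
    rw [mem_filter, Nat.mem_antidiagonalTuple]
    exact ⟨sum_card_of_mem_orderedPartitions ht.1, fun j => card_pos.2 (ht.2 j)⟩
  rw [← sum_fiberwise_of_maps_to hmaps]
  refine sum_congr rfl fun f hf => ?_
  rw [mem_filter, Nat.mem_antidiagonalTuple] at hf
  have hfiber :
      {t ∈ {t ∈ orderedPartitions S k | ∀ j, (t j).Nonempty} | (fun j => #(t j)) = f} =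
        {t ∈ orderedPartitions S k | ∀ j, #(t j) = f j} := by
    ext t
    simp only [mem_filter, funext_iff, ← card_pos]
    constructor
    · rintro ⟨⟨ht, -⟩, hcard⟩
      exact ⟨ht, hcard⟩
    · rintro ⟨ht, hcard⟩
      exact ⟨⟨ht, fun j => hcard j ▸ hf.2 j⟩, hcard⟩
  have hconst : ∀ t ∈ {t ∈ {t ∈ orderedPartitions S k | ∀ j, (t j).Nonempty} |
      (fun j => #(t j)) = f}, ∏ j, F #(t j) = ∏ j, F (f j) := fun t ht => by
    rw [← (mem_filter.1 ht).2]
  rw [sum_congr rfl hconst, sum_const, hfiber,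
    card_orderedPartitions_filter_card_eq S f hf.1, nsmul_eq_mul]

end OrderedPartitions

lemma injective_of_card_image_univ {γ : Type*} [DecidableEq γ] {k : ℕ} {t : Fin k → γ}
    (h : #(univ.image t) = k) : Injective t := by
  have hinj : Set.InjOn t (univ : Finset (Fin k)) := by
    rw [← card_image_iff, h, card_univ, Fintype.card_fin]
  exact fun i j hij => hinj (mem_coe.2 (mem_univ i)) (mem_coe.2 (mem_univ j)) hij

lemma card_filter_image_univ_eq_factorial {γ : Type*} [Fintype γ] [DecidableEq γ] {k : ℕ}
    {P : Finset γ} (hP : #P = k) :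
    #{t : Fin k → γ | univ.image t = P} = k ! := by
  have hcount : #(univ : Finset (Fin k ↪ P)) = k ! := by
    rw [card_univ, Fintype.card_embedding_eq, Fintype.card_coe, hP, Fintype.card_fin,
      Nat.descFactorial_self]
  rw [← hcount]
  symm
  refine card_bij (fun e _ => Subtype.val ∘ e) (fun e _ => ?_) (fun e₁ _ e₂ _ h => ?_) ?_
  · have hsub : univ.image (Subtype.val ∘ e) ⊆ P := by
      simp [image_subset_iff]
    rw [mem_filter]
    refine ⟨mem_univ _, eq_of_subset_of_card_le hsub ?_⟩
    rw [card_image_of_injective _ (Subtype.val_injective.comp e.injective), card_univ,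
      Fintype.card_fin, hP]
  · ext j
    exact congrFun h j
  · intro t ht
    rw [mem_filter] at ht
    have hinj := injective_of_card_image_univ (ht.2 ▸ hP)
    have hmem : ∀ j, t j ∈ P := fun j => ht.2 ▸ mem_image_of_mem t (mem_univ j)
    exact ⟨⟨fun j => ⟨t j, hmem j⟩, fun i j h => hinj (congrArg Subtype.val h)⟩,
      mem_univ _, rfl⟩

section SetPartitions

variable {s k : ℕ}

lemma mem_allPartitions {P : Finset (Finset (Fin s))} :
    P ∈ allPartitions s ↔ isSetPartition P := by
  simp [allPartitions]

lemma mem_orderedPartitions_univ_and_nonempty_iff {t : Fin k → Finset (Fin s)} :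
    (t ∈ orderedPartitions univ k ∧ ∀ j, (t j).Nonempty) ↔
      Injective t ∧ univ.image t ∈ allPartitions s := by
  simp only [mem_orderedPartitions, mem_allPartitions, isSetPartition, sup_image,
    id_comp, mem_image, mem_univ, true_and, forall_exists_index, forall_apply_eq_imp_iff,
    ← nonempty_iff_ne_empty, not_exists]
  constructor
  · rintro ⟨⟨hdisj, hsup⟩, hne⟩
    have hinj : Injective t := fun i j hij => by
      by_contra h
      have hself : Disjoint (t i) (t j) := hdisj h
      rw [hij, disjoint_self] at hself
      exact (hne j).ne_empty hself
    exact ⟨hinj, hne, fun i j hij => hdisj fun h => hij (congrArg t h), hsup⟩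
  · rintro ⟨hinj, hne, hdisj, hsup⟩
    exact ⟨⟨fun i j hij => hdisj i j (hinj.ne hij), hsup⟩, hne⟩

theorem sum_orderedPartitions_univ_eq_factorial_mul {R : Type*} [CommSemiring R]
    (F : Finset (Fin s) → R) :
    ∑ t ∈ orderedPartitions univ k with ∀ j, (t j).Nonempty, ∏ j, F (t j) =
      k ! * ∑ P ∈ allPartitions s with #P = k, ∏ A ∈ P, F A := by
  have hmaps :
      ∀ t ∈ {t ∈ orderedPartitions (univ : Finset (Fin s)) k | ∀ j, (t j).Nonempty},
        univ.image t ∈ {P ∈ allPartitions s | #P = k} := by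
    intro t ht
    obtain ⟨hinj, hP⟩ := mem_orderedPartitions_univ_and_nonempty_iff.1 (mem_filter.1 ht)
    rw [mem_filter, card_image_of_injective _ hinj, card_univ, Fintype.card_fin]
    exact ⟨hP, rfl⟩
  rw [← sum_fiberwise_of_maps_to hmaps, mul_sum]
  refine sum_congr rfl fun P hP => ?_
  rw [mem_filter] at hP
  have hfiber : {t ∈ {t ∈ orderedPartitions (univ : Finset (Fin s)) k | ∀ j, (t j).Nonempty} |
      univ.image t = P} =
      ({t | univ.image t = P} : Finset (Fin k → Finset (Fin s))) := by
    ext t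
    simp only [mem_filter, mem_univ, true_and, and_iff_right_iff_imp]
    intro ht
    exact mem_orderedPartitions_univ_and_nonempty_iff.2
      ⟨injective_of_card_image_univ (ht ▸ hP.2), ht ▸ hP.1⟩
  have hconst : ∀ t ∈ ({t | univ.image t = P} : Finset (Fin k → Finset (Fin s))),
      ∏ j, F (t j) = ∏ A ∈ P, F A := by
    intro t ht
    rw [mem_filter] at ht
    rw [← ht.2, prod_image fun i _ j _ hij => injective_of_card_image_univ (ht.2 ▸ hP.2) hij]
  rw [hfiber, sum_congr rfl hconst, sum_const, card_filter_image_univ_eq_factorial hP.2,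
    nsmul_eq_mul]

theorem sum_allPartitions_filter_card_eq {K : Type*} [Field K] [CharZero K] (s k : ℕ)
    (F : ℕ → K) :
    ∑ P ∈ allPartitions s with #P = k, ∏ A ∈ P, F #A =
      (s ! / k ! : K) * ∑ f ∈ Nat.antidiagonalTuple k s with ∀ j, 0 < f j,
        ∏ j, F (f j) / (f j)! := by
  have hcount :=
    (sum_orderedPartitions_univ_eq_factorial_mul fun A : Finset (Fin s) => F #A).symm.trans
      (sum_orderedPartitions_prod_card_eq_sum_multinomial univ k F)
  rw [card_univ, Fintype.card_fin] at hcount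
  have hfac : ∀ j : ℕ, (j ! : K) ≠ 0 := fun j => Nat.cast_ne_zero.2 j.factorial_ne_zero
  rw [div_mul_eq_mul_div, eq_div_iff (hfac k), mul_comm, hcount, mul_sum]
  refine sum_congr rfl fun f hf => ?_
  rw [mem_filter, Nat.mem_antidiagonalTuple] at hf
  have hspec := Nat.multinomial_spec univ f
  rw [hf.1] at hspec
  have hprod : ∏ j, ((f j)! : K) ≠ 0 := prod_ne_zero_iff.2 fun j _ => hfac _
  rw [prod_div_distrib, ← hspec, Nat.cast_mul, Nat.cast_prod]
  field_simp

theorem genStirling_eq_sum_allPartitions (α : ℝ) (s k : ℕ) :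
    genStirling α s k =
      ∑ P ∈ allPartitions s with #P = k, ∏ A ∈ P, risefac (1 - α) (#A - 1) := by
  rw [sum_allPartitions_filter_card_eq s k fun c => risefac (1 - α) (c - 1), genStirling]

lemma card_mem_Icc_of_mem_allPartitions (hs : 0 < s) {P : Finset (Finset (Fin s))}
    (hP : P ∈ allPartitions s) : #P ∈ Icc 1 s := by
  obtain ⟨hempty, hdisj, hsup⟩ := mem_allPartitions.1 hP
  have hsum : ∑ A ∈ P, #A = s := by
    have hcover : P.biUnion id = univ := (sup_eq_biUnion P id).symm.trans hsup
    have hcard := card_biUnion (t := id) hdisj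
    rw [hcover, card_univ, Fintype.card_fin] at hcard
    exact hcard.symm
  have hne : P.Nonempty := by
    rw [nonempty_iff_ne_empty]
    rintro rfl
    simp at hsum
    omega
  refine mem_Icc.2 ⟨one_le_card.2 hne, ?_⟩
  calc #P = ∑ _A ∈ P, 1 := card_eq_sum_ones P
    _ ≤ ∑ A ∈ P, #A := sum_le_sum fun A hA =>
      one_le_card.2 (nonempty_iff_ne_empty.2 fun h => hempty (h ▸ hA))
    _ = s := hsum

theorem sum_allPartitions_eq_sum_genStirling (hs : 0 < s) (α : ℝ) (G : ℕ → ℝ) :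
    ∑ P ∈ allPartitions s, G #P * ∏ A ∈ P, risefac (1 - α) (#A - 1) =
      ∑ j ∈ Icc 1 s, G j * genStirling α s j := by
  rw [← sum_fiberwise_of_maps_to fun P hP => card_mem_Icc_of_mem_allPartitions hs hP]
  refine sum_congr rfl fun j _ => ?_
  rw [genStirling_eq_sum_allPartitions, mul_sum]
  exact sum_congr rfl fun P hP => by rw [(mem_filter.1 hP).2]

end SetPartitions

lemma div_div_sum_div_cancel {K ι : Type*} [Field K] (I : Finset ι) {c d : K} (hc : c ≠ 0)
    (hd : d ≠ 0) (x y : K) (g h : ι → K) :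
    x * (c * y) / d / ∑ i ∈ I, g i * (c * h i) / d = x * y / ∑ i ∈ I, g i * h i := by
  have hterm : ∀ a b : K, a * (c * b) / d = a * b * (c / d) := fun a b => by ring
  simp_rw [hterm, ← sum_mul]
  exact mul_div_mul_right _ _ (div_ne_zero hc hd)

theorem gibbs_deletion_of_classes_general (α : ℝ) (hα : α < 1) (V : ℕ → ℕ → ℝ)
    (k : ℕ) (nvec : Fin k → ℕ)
    (n : ℕ) (hVn : V n k ≠ 0)
    (s m : ℕ) (hs : 1 ≤ s)
    (mvec : Fin k → ℕ)
    (kstar : ℕ) (svec : Fin kstar → ℕ) :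
    ((V (n + m) (k + kstar) * ((∏ j, risefac (1 - α) (nvec j + mvec j - 1)) *
            ∏ i, risefac (1 - α) (svec i - 1))) /
          (V n k * ∏ j, risefac (1 - α) (nvec j - 1))) /
        (∑ P ∈ allPartitions s,
          (V (n + m) (k + P.card) * ((∏ j, risefac (1 - α) (nvec j + mvec j - 1)) *
              ∏ A ∈ P, risefac (1 - α) (A.card - 1))) /
            (V n k * ∏ j, risefac (1 - α) (nvec j - 1)))
      = V (n + m) (k + kstar) * (∏ i, risefac (1 - α) (svec i - 1)) /
          (∑ kstar' ∈ Finset.Icc 1 s, V (n + m) (k + kstar') * genStirling α s kstar') := by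
  have h1α : 0 < 1 - α := by linarith
  rw [div_div_sum_div_cancel _ (prod_pos fun j _ => risefac_pos h1α _).ne'
    (mul_ne_zero hVn (prod_pos fun j _ => risefac_pos h1α _).ne')]
  exact congrArg _ (sum_allPartitions_eq_sum_genStirling hs α fun j => V (n + m) (k + j))

/-- The EPPF of the partition obtained by deletion of the first `k` classes: conditionally
on the allocation `(m_1,…,m_k)` at old tables,
`[p(n_1+m_1,…,n_k+m_k,s_1,…,s_{k*})/p(n)] / [∑_P p(n_1+m_1,…,n_k+m_k,|B_1|,…,|B_{k*'}|)/p(n)]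
  = V(n+m,k+k*) ∏_i (1−α)_{s_i−1↑} / D`,
where `p(n_1,…,n_k) = V(n,k) ∏_j (1−α)_{n_j−1↑}`, `P` runs over partitions of `{1,…,s}`,
and `D = ∑_{k*'=1}^s V(n+m,k+k*') S_{s,k*'}^{-1,-α}`. -/
theorem gibbs_deletion_of_classes (α : ℝ) (hα : α < 1) (V : ℕ → ℕ → ℝ)
    (k : ℕ) (nvec : Fin k → ℕ) (hpos : ∀ j, 0 < nvec j)
    (n : ℕ) (hsum : ∑ j, nvec j = n) (hVn : V n k ≠ 0)
    (s m : ℕ) (hs : 1 ≤ s) (hsm : s ≤ m)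
    (mvec : Fin k → ℕ) (hmsum : ∑ j, mvec j = m - s)
    (hD : (∑ kstar' ∈ Finset.Icc 1 s, V (n + m) (k + kstar') * genStirling α s kstar') ≠ 0)
    (hprod : (∏ j, risefac ((nvec j : ℝ) - α) (mvec j)) ≠ 0)
    (kstar : ℕ) (svec : Fin kstar → ℕ) (hsv : ∀ i, 0 < svec i) (hssum : ∑ i, svec i = s) :
    ((V (n + m) (k + kstar) * ((∏ j, risefac (1 - α) (nvec j + mvec j - 1)) *
            ∏ i, risefac (1 - α) (svec i - 1))) /
          (V n k * ∏ j, risefac (1 - α) (nvec j - 1))) /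
        (∑ P ∈ allPartitions s,
          (V (n + m) (k + P.card) * ((∏ j, risefac (1 - α) (nvec j + mvec j - 1)) *
              ∏ A ∈ P, risefac (1 - α) (A.card - 1))) /
            (V n k * ∏ j, risefac (1 - α) (nvec j - 1)))
      = V (n + m) (k + kstar) * (∏ i, risefac (1 - α) (svec i - 1)) /
          (∑ kstar' ∈ Finset.Icc 1 s, V (n + m) (k + kstar') * genStirling α s kstar') :=
  gibbs_deletion_of_classes_general α hα V k nvec n hVn s m hs mvec kstar svec
end
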